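/- Let m be a discrete m-function whose continued fraction coefficients form a p-periodic pair ((a_j),(b_j)) that is doubly palindromic with period p and first length ℓ, with stripping sequence (m_n)_{n≥0}. Let m⁻ be the discrete m-function whose continued fraction coefficients are p-periodic with one period (a_{p−1},b_p), (a_{p−2},b_{p−1}),…,(a_1,b_2), (a_p,b_1). Then m⁻(z) = m_{ℓ+1}(z) for all z ∈ ℂ₊; consequently m⁻(z) = (p_{ℓ+1}(z)m(z) + q_{ℓ+1}(z)) / (−a_{ℓ+1}(p_ℓ(z)m(z) + q_ℓ(z))) for all z ∈ ℂ₊, where p_{ℓ+1}(z) = p_{ℓ+1}(z;{a_j,b_j}_{j=1}^{ℓ+1}) and similarly for q_{ℓ+1}, p_ℓ, q_ℓ. -/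

import Mathlib

open MeasureTheory Polynomial Filter

noncomputable section

/-- A discrete m-function: the Cauchy transform of a compactly supported
probability measure on `ℝ`, viewed as a function on the upper half plane
`ℂ₊ = {z : 0 < z.im}`. -/
def IsDiscreteMFunction (m : ℂ → ℂ) : Prop :=
  ∃ ρ : Measure ℝ, IsProbabilityMeasure ρ ∧ (∃ t : ℝ, ρ (Set.Icc (-t) t) = 1) ∧
    ∀ z : ℂ, 0 < z.im → m z = ∫ x : ℝ, ((x : ℂ) - z)⁻¹ ∂ρ

/-- `m` has continued fraction (Jacobi) coefficients `{(a n, b n)}_{n ≥ 1}`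
(sequences indexed from 1; index 0 unused) with stripping sequence `ms`. -/
def HasJacobiCoeffs (m : ℂ → ℂ) (a b : ℕ → ℝ) (ms : ℕ → ℂ → ℂ) : Prop :=
  ms 0 = m ∧ (∀ n, IsDiscreteMFunction (ms n)) ∧
    ∀ n, ∀ z : ℂ, 0 < z.im →
      ms n z = ((b (n + 1) : ℂ) - z - (a (n + 1) : ℂ) ^ 2 * ms (n + 1) z)⁻¹

/-- Shifted first-kind polynomials: `pShift a b (j+1) = p_j(·; {a_i, b_i}_{i=1}^j)`,
so `pShift a b 0 = p₋₁ = 0`, `pShift a b 1 = p₀ = 1`, and the recurrence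
`z p_j = a_{j+1} p_{j+1} + b_{j+1} p_j + a_j p_{j-1}` holds. -/
def pShift (a b : ℕ → ℝ) : ℕ → ℂ → ℂ
  | 0 => fun _ => 0
  | 1 => fun _ => 1
  | (n + 2) => fun z =>
      ((z - (b (n + 1) : ℂ)) * pShift a b (n + 1) z - (a n : ℂ) * pShift a b n z) /
        (a (n + 1) : ℂ)

/-- The first-kind polynomial `p_n(z; {a_j, b_j}_{j=1}^n)`. -/
def firstKind (a b : ℕ → ℝ) (n : ℕ) : ℂ → ℂ := pShift a b (n + 1)

/-- The second-kind polynomial `q_n(z; {a_j, b_j}_{j=1}^n) = a₁⁻¹ p_{n-1}(z; {a_j, b_j}_{j=2}^n)`,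
with `q₀ = 0`. -/
def secondKind (a b : ℕ → ℝ) (n : ℕ) : ℂ → ℂ :=
  fun z => ((a 1 : ℂ))⁻¹ * pShift (fun j => a (j + 1)) (fun j => b (j + 1)) n z

/-- The conjugated transfer matrix `T_n = [[p_n, q_n], [-a_n p_{n-1}, -a_n q_{n-1}]]`
of the parameters `(a_j, b_j)_{j=1}^n`. -/
def ctm (a b : ℕ → ℝ) (n : ℕ) : Matrix (Fin 2) (Fin 2) (ℂ → ℂ) :=
  !![firstKind a b n, secondKind a b n;
     (fun z => -(a n : ℂ) * firstKind a b (n - 1) z),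
     (fun z => -(a n : ℂ) * secondKind a b (n - 1) z)]

/-- The finite string `(s (start+1), …, s (start+len))` is a palindrome. -/
def PalSeg {α : Type*} (s : ℕ → α) (start len : ℕ) : Prop :=
  ∀ i, 1 ≤ i → i ≤ len → s (start + i) = s (start + (len + 1 - i))

/-- The pair of `p`-periodic sequences `(a, b)` is doubly palindromic with period `p`
and first length `ℓ` (`1 ≤ ℓ ≤ p - 2`): `(a₁,…,a_ℓ)` and `(a_{ℓ+1},…,a_p)` are palindromes,
and `(b₁,…,b_{ℓ+1})` and `(b_{ℓ+2},…,b_p)` are palindromes. -/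
def DoublyPalindromic (a b : ℕ → ℝ) (p ℓ : ℕ) : Prop :=
  1 ≤ ℓ ∧ ℓ + 2 ≤ p ∧
    PalSeg a 0 ℓ ∧ PalSeg a ℓ (p - ℓ) ∧
    PalSeg b 0 (ℓ + 1) ∧ PalSeg b (ℓ + 1) (p - (ℓ + 1))

/-!
Reversal acts on indices modulo `p` as `k ↦ -k` (for `a`, whose period is reversed with `a_p`
kept in place) and `k ↦ 1 - k` (for `b`). The two adjacent palindromes make `a` symmetric under
`k ↦ ℓ + 1 - k` and `b` under `k ↦ ℓ + 2 - k` modulo `p`, so composing, the reversed coefficients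
are those of `m` shifted by `ℓ + 1`, i.e. the coefficients of `m_{ℓ+1}`. Two discrete m-functions
with the same bounded coefficients agree: for `Im z ≥ S + 1` every stripping step contracts
their difference by `(S / (S + 1))²`, and both are analytic on `ℂ₊`. The Möbius formula holds
because `u_n = p_n m + q_n` satisfies the three-term recurrence, whence
`u_{n+1} = -a_{n+1} m_{n+1} u_n`.
-/

open scoped Topology

lemma norm_inv_ofReal_sub_le {z : ℂ} (x : ℝ) (hz : 0 < z.im) : ‖((x : ℂ) - z)⁻¹‖ ≤ z.im⁻¹ := by
  rw [norm_inv]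
  refine inv_anti₀ hz ?_
  simpa using (neg_le_abs _).trans (Complex.abs_im_le_norm ((x : ℂ) - z))

lemma im_inv_ofReal_sub_nonneg {z : ℂ} (x : ℝ) (hz : 0 < z.im) : 0 ≤ (((x : ℂ) - z)⁻¹).im := by
  rw [Complex.inv_im]
  simpa using div_nonneg hz.le (Complex.normSq_nonneg ((x : ℂ) - z))

namespace IsDiscreteMFunction

variable {f : ℂ → ℂ} {z : ℂ}

lemma norm_le (hf : IsDiscreteMFunction f) (hz : 0 < z.im) : ‖f z‖ ≤ z.im⁻¹ := by
  obtain ⟨ρ, hρ, -, hrep⟩ := hf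
  rw [hrep z hz]
  simpa using norm_integral_le_of_norm_le_const (μ := ρ)
    (Eventually.of_forall fun x => norm_inv_ofReal_sub_le x hz)

lemma im_nonneg (hf : IsDiscreteMFunction f) (hz : 0 < z.im) : 0 ≤ (f z).im := by
  obtain ⟨ρ, hρ, -, hrep⟩ := hf
  have hint : Integrable (fun x : ℝ => ((x : ℂ) - z)⁻¹) ρ :=
    (integrable_const z.im⁻¹).mono' (by fun_prop)
      (Eventually.of_forall fun x => norm_inv_ofReal_sub_le x hz)
  rw [hrep z hz, ← RCLike.im_to_complex, ← integral_im hint]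
  exact integral_nonneg fun x => im_inv_ofReal_sub_nonneg x hz

lemma analyticOnNhd (hf : IsDiscreteMFunction f) : AnalyticOnNhd ℂ f {z | 0 < z.im} := by
  obtain ⟨ρ, hρ, -, hrep⟩ := hf
  have hU : IsOpen {z : ℂ | 0 < z.im} := isOpen_lt continuous_const Complex.continuous_im
  have hsub : {z : ℂ | 0 < z.im} ⊆ (algebraMap ℝ ℂ '' ρ.support)ᶜ := by
    rintro z hz ⟨x, -, rfl⟩
    simp at hz
  refine (hU.analyticOn_iff_analyticOnNhd.mp (analyticOn_resolventTransform.mono hsub)).congr hU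
    fun z hz => ?_
  simp [hrep z hz, resolventTransform_apply, resolvent, Ring.inverse_eq_inv]

end IsDiscreteMFunction

lemma ofReal_sub_sub_sq_mul_ne_zero {α β : ℝ} {z w : ℂ} (hz : 0 < z.im) (hw : 0 ≤ w.im) :
    (β : ℂ) - z - (α : ℂ) ^ 2 * w ≠ 0 := by
  intro h
  have him := congrArg Complex.im h
  simp only [Complex.sub_im, Complex.ofReal_im, ← Complex.ofReal_pow, Complex.im_ofReal_mul,
    Complex.zero_im] at him
  nlinarith [sq_nonneg α]

lemma le_zero_of_le_mul_succ {d : ℕ → ℝ} {q C : ℝ} (hq0 : 0 ≤ q) (hq1 : q < 1)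
    (hC : ∀ n, d n ≤ C) (hd : ∀ n, d n ≤ q * d (n + 1)) : d 0 ≤ 0 := by
  have hpow : ∀ n, d 0 ≤ q ^ n * C := by
    intro n
    suffices d 0 ≤ q ^ n * d n from this.trans (by gcongr; exact hC n)
    induction n with
    | zero => simp
    | succ k ih => calc
        d 0 ≤ q ^ k * d k := ih
        _ ≤ q ^ k * (q * d (k + 1)) := by gcongr; exact hd k
        _ = q ^ (k + 1) * d (k + 1) := by ring
  have hlim : Tendsto (fun n => q ^ n * C) atTop (𝓝 0) := by
    simpa using (tendsto_pow_atTop_nhds_zero_of_lt_one hq0 hq1).mul_const C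
  exact ge_of_tendsto' hlim hpow

lemma firstKind_add_two (a b : ℕ → ℝ) (n : ℕ) (z : ℂ) :
    firstKind a b (n + 2) z = ((z - b (n + 2)) * firstKind a b (n + 1) z
      - a (n + 1) * firstKind a b n z) / a (n + 2) := rfl

lemma secondKind_add_two (a b : ℕ → ℝ) (n : ℕ) (z : ℂ) :
    secondKind a b (n + 2) z = ((z - b (n + 2)) * secondKind a b (n + 1) z
      - a (n + 1) * secondKind a b n z) / a (n + 2) := by
  simp only [secondKind, pShift]
  ring

namespace HasJacobiCoeffs

variable {m m₁ m₂ : ℂ → ℂ} {a b : ℕ → ℝ} {ms ms₁ ms₂ : ℕ → ℂ → ℂ} {z : ℂ}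

lemma mul_denom_eq_one (h : HasJacobiCoeffs m a b ms) (hz : 0 < z.im) (n : ℕ) :
    ms n z * ((b (n + 1) : ℂ) - z - (a (n + 1) : ℂ) ^ 2 * ms (n + 1) z) = 1 := by
  rw [h.2.2 n z hz]
  exact inv_mul_cancel₀ (ofReal_sub_sub_sq_mul_ne_zero hz ((h.2.1 (n + 1)).im_nonneg hz))

lemma ne_zero (h : HasJacobiCoeffs m a b ms) (hz : 0 < z.im) (n : ℕ) : ms n z ≠ 0 :=
  left_ne_zero_of_mul_eq_one (h.mul_denom_eq_one hz n)

lemma shift (h : HasJacobiCoeffs m a b ms) (k : ℕ) :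
    HasJacobiCoeffs (ms k) (fun j => a (k + j)) (fun j => b (k + j)) (fun n => ms (k + n)) :=
  ⟨rfl, fun n => h.2.1 (k + n), fun n => h.2.2 (k + n)⟩

lemma congr_coeffs {a' b' : ℕ → ℝ} (h : HasJacobiCoeffs m a b ms)
    (ha : ∀ n, a (n + 1) = a' (n + 1)) (hb : ∀ n, b (n + 1) = b' (n + 1)) :
    HasJacobiCoeffs m a' b' ms :=
  ⟨h.1, h.2.1, fun n z hz => by rw [← ha, ← hb]; exact h.2.2 n z hz⟩

lemma sub_eq_mul_sub_succ (h₁ : HasJacobiCoeffs m₁ a b ms₁) (h₂ : HasJacobiCoeffs m₂ a b ms₂)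
    (hz : 0 < z.im) (n : ℕ) :
    ms₁ n z - ms₂ n z =
      (a (n + 1) : ℂ) ^ 2 * (ms₁ (n + 1) z - ms₂ (n + 1) z) * ms₁ n z * ms₂ n z := by
  linear_combination ms₂ n z * h₁.mul_denom_eq_one hz n - ms₁ n z * h₂.mul_denom_eq_one hz n

lemma eq_of_le_im (h₁ : HasJacobiCoeffs m₁ a b ms₁) (h₂ : HasJacobiCoeffs m₂ a b ms₂)
    {S : ℝ} (hS : ∀ n, |a (n + 1)| ≤ S) (hz : S + 1 ≤ z.im) : m₁ z = m₂ z := by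
  have hS0 : 0 ≤ S := (abs_nonneg _).trans (hS 0)
  have hz0 : 0 < z.im := by linarith
  have hms : ∀ {m : ℂ → ℂ} {ms : ℕ → ℂ → ℂ}, HasJacobiCoeffs m a b ms →
      ∀ n, ‖ms n z‖ ≤ (S + 1)⁻¹ :=
    fun h n => ((h.2.1 n).norm_le hz0).trans (inv_anti₀ (by linarith) hz)
  have hbound : ∀ n, ‖ms₁ n z - ms₂ n z‖ ≤ 2 := fun n => calc
    ‖ms₁ n z - ms₂ n z‖ ≤ ‖ms₁ n z‖ + ‖ms₂ n z‖ := norm_sub_le _ _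
    _ ≤ 1 + 1 := by
      gcongr <;> exact (hms ‹_› n).trans (inv_le_one_of_one_le₀ (by linarith))
    _ = 2 := by norm_num
  have hstep : ∀ n, ‖ms₁ n z - ms₂ n z‖ ≤
      (S / (S + 1)) ^ 2 * ‖ms₁ (n + 1) z - ms₂ (n + 1) z‖ := fun n => calc
    ‖ms₁ n z - ms₂ n z‖ =
        |a (n + 1)| ^ 2 * ‖ms₁ (n + 1) z - ms₂ (n + 1) z‖ * ‖ms₁ n z‖ * ‖ms₂ n z‖ := by
      rw [sub_eq_mul_sub_succ h₁ h₂ hz0 n]; simp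
    _ ≤ S ^ 2 * ‖ms₁ (n + 1) z - ms₂ (n + 1) z‖ * (S + 1)⁻¹ * (S + 1)⁻¹ := by
      gcongr
      exacts [hS n, hms h₁ n, hms h₂ n]
    _ = (S / (S + 1)) ^ 2 * ‖ms₁ (n + 1) z - ms₂ (n + 1) z‖ := by ring
  have hq : (S / (S + 1)) ^ 2 < 1 := by
    rw [sq_lt_one_iff₀ (by positivity), div_lt_one (by linarith)]
    linarith
  have h0 := le_zero_of_le_mul_succ (by positivity) hq hbound hstep
  rw [← h₁.1, ← h₂.1, ← sub_eq_zero, ← norm_le_zero_iff]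
  exact h0

theorem eqOn (h₁ : HasJacobiCoeffs m₁ a b ms₁) (h₂ : HasJacobiCoeffs m₂ a b ms₂)
    {S : ℝ} (hS : ∀ n, |a (n + 1)| ≤ S) : Set.EqOn m₁ m₂ {z | 0 < z.im} := by
  have han : ∀ {m : ℂ → ℂ} {ms : ℕ → ℂ → ℂ}, HasJacobiCoeffs m a b ms →
      AnalyticOnNhd ℂ m {z | 0 < z.im} := fun h => h.1 ▸ (h.2.1 0).analyticOnNhd
  have hS0 : 0 ≤ S := (abs_nonneg _).trans (hS 0)
  set z₀ : ℂ := ((S + 2 : ℝ) : ℂ) * Complex.I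
  have hz₀ : z₀.im = S + 2 := by simp [z₀]
  have hnear : m₁ =ᶠ[𝓝 z₀] m₂ := by
    filter_upwards [(isOpen_lt continuous_const Complex.continuous_im).mem_nhds
      (show S + 1 < z₀.im by linarith)] with w hw
    exact eq_of_le_im h₁ h₂ hS hw.le
  exact (han h₁).eqOn_of_preconnected_of_eventuallyEq (han h₂)
    (convex_halfSpace_im_gt 0).isPreconnected (show 0 < z₀.im by linarith) hnear

lemma firstKind_mul_add_secondKind_succ (h : HasJacobiCoeffs m a b ms)
    (ha : ∀ n, a (n + 1) ≠ 0) (hz : 0 < z.im) (n : ℕ) :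
    firstKind a b (n + 1) z * m z + secondKind a b (n + 1) z =
      -a (n + 1) * ms (n + 1) z * (firstKind a b n z * m z + secondKind a b n z) := by
  have haC : ∀ n, (a (n + 1) : ℂ) ≠ 0 := fun n => Complex.ofReal_ne_zero.mpr (ha n)
  induction n with
  | zero =>
    have h0 := h.mul_denom_eq_one hz 0
    rw [h.1] at h0
    simp only [firstKind, secondKind, pShift]
    field_simp [haC 0]
    linear_combination -h0
  | succ k ih =>
    rw [firstKind_add_two, secondKind_add_two, div_mul_eq_mul_div, ← add_div,
      div_eq_iff (haC (k + 1))]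
    linear_combination
      -((b (k + 2) : ℂ) - z - (a (k + 2) : ℂ) ^ 2 * ms (k + 2) z) * ih
      + a (k + 1) * (firstKind a b k z * m z + secondKind a b k z) *
        h.mul_denom_eq_one hz (k + 1)

lemma firstKind_mul_add_secondKind_ne_zero (h : HasJacobiCoeffs m a b ms)
    (ha : ∀ n, a (n + 1) ≠ 0) (hz : 0 < z.im) (n : ℕ) :
    firstKind a b n z * m z + secondKind a b n z ≠ 0 := by
  induction n with
  | zero => simpa [firstKind, secondKind, pShift, ← h.1] using h.ne_zero hz 0
  | succ k ih =>
    rw [h.firstKind_mul_add_secondKind_succ ha hz]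
    exact mul_ne_zero (mul_ne_zero (by exact_mod_cast neg_ne_zero.mpr (ha k)) (h.ne_zero hz _)) ih

lemma apply_succ_eq_div (h : HasJacobiCoeffs m a b ms) (ha : ∀ n, a (n + 1) ≠ 0)
    (hz : 0 < z.im) (n : ℕ) :
    ms (n + 1) z = (firstKind a b (n + 1) z * m z + secondKind a b (n + 1) z) /
      (-(a (n + 1) : ℂ) * (firstKind a b n z * m z + secondKind a b n z)) := by
  rw [eq_div_iff (mul_ne_zero (by exact_mod_cast neg_ne_zero.mpr (ha n))
    (h.firstKind_mul_add_secondKind_ne_zero ha hz n)), h.firstKind_mul_add_secondKind_succ ha hz]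
  ring

end HasJacobiCoeffs

section Periodic

variable {α : Type*} {f g : ℕ → α} {p : ℕ}

lemma apply_add_mul_of_periodic (hf : ∀ j, 1 ≤ j → f (j + p) = f j) {i : ℕ} (hi : 1 ≤ i)
    (k : ℕ) : f (i + k * p) = f i := by
  induction k with
  | zero => simp
  | succ k ih => rw [Nat.succ_mul, ← add_assoc, hf _ (by omega), ih]

lemma apply_eq_apply_mod_of_periodic (hf : ∀ j, 1 ≤ j → f (j + p) = f j) {j : ℕ}
    (hj : 1 ≤ j) : f j = f ((j - 1) % p + 1) := by
  have hdiv := Nat.mod_add_div' (j - 1) p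
  rw [← apply_add_mul_of_periodic hf (Nat.le_add_left 1 _) ((j - 1) / p)]
  congr 1
  omega

lemma eq_of_periodic_of_eqOn_Icc (hp : 0 < p) (hf : ∀ j, 1 ≤ j → f (j + p) = f j)
    (hg : ∀ j, 1 ≤ j → g (j + p) = g j) (hfg : ∀ j, 1 ≤ j → j ≤ p → f j = g j) {j : ℕ}
    (hj : 1 ≤ j) : f j = g j := by
  rw [apply_eq_apply_mod_of_periodic hf hj, apply_eq_apply_mod_of_periodic hg hj]
  exact hfg _ (Nat.le_add_left 1 _) (Nat.mod_lt _ hp)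

lemma abs_le_sum_of_periodic {f : ℕ → ℝ} (hp : 0 < p) (hf : ∀ j, 1 ≤ j → f (j + p) = f j)
    {j : ℕ} (hj : 1 ≤ j) : |f j| ≤ ∑ i ∈ Finset.Icc 1 p, |f i| := by
  rw [apply_eq_apply_mod_of_periodic hf hj]
  exact Finset.single_le_sum (fun i _ => abs_nonneg (f i))
    (Finset.mem_Icc.mpr ⟨Nat.le_add_left 1 _, Nat.mod_lt _ hp⟩)

lemma apply_eq_apply_reflect_of_palSeg (hf : ∀ j, 1 ≤ j → f (j + p) = f j) {r : ℕ}
    (h₁ : PalSeg f 0 r) (h₂ : PalSeg f r (p - r)) {k : ℕ} (hk : 1 ≤ k) (hkp : k ≤ p) :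
    f k = f (p + r + 1 - k) := by
  rcases le_or_gt k r with hkr | hkr
  · calc f k = f (r + 1 - k) := by simpa using h₁ k hk hkr
      _ = f (r + 1 - k + p) := (hf _ (by omega)).symm
      _ = f (p + r + 1 - k) := by congr 1; omega
  · calc f k = f (r + (k - r)) := by congr 1; omega
      _ = f (r + (p - r + 1 - (k - r))) := h₂ _ (by omega) (by omega)
      _ = f (p + r + 1 - k) := by congr 1; omega

lemma shift_periodic (hf : ∀ j, 1 ≤ j → f (j + p) = f j) (k : ℕ) :
    ∀ j, 1 ≤ j → f (k + (j + p)) = f (k + j) :=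
  fun j _ => by rw [← add_assoc]; exact hf _ (by omega)

end Periodic

section Reversal

variable {α : Type*} {s t : ℕ → α} {p ℓ : ℕ}

lemma rotated_reverse_eq_shift_of_palSeg (hp : 0 < p) (hsper : ∀ j, 1 ≤ j → s (j + p) = s j)
    (htper : ∀ j, 1 ≤ j → t (j + p) = t j) (h₁ : PalSeg s 0 ℓ) (h₂ : PalSeg s ℓ (p - ℓ))
    (ht : ∀ j, 1 ≤ j → j ≤ p - 1 → t j = s (p - j)) (htp : t p = s p) {j : ℕ}
    (hj : 1 ≤ j) : t j = s (ℓ + 1 + j) := by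
  refine eq_of_periodic_of_eqOn_Icc (g := fun j => s (ℓ + 1 + j)) hp htper
    (shift_periodic hsper _) (fun i hi hip => ?_) hj
  rcases hip.lt_or_eq with hip | hip
  · calc t i = s (p - i) := ht i hi (by omega)
      _ = s (p + ℓ + 1 - (p - i)) :=
        apply_eq_apply_reflect_of_palSeg hsper h₁ h₂ (by omega) (by omega)
      _ = s (ℓ + 1 + i) := by congr 1; omega
  · rw [hip]
    calc t p = s p := htp
      _ = s (p + ℓ + 1 - p) := apply_eq_apply_reflect_of_palSeg hsper h₁ h₂ hp le_rfl
      _ = s (ℓ + 1) := by congr 1; omega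
      _ = s (ℓ + 1 + p) := (hsper _ (by omega)).symm

lemma reverse_eq_shift_of_palSeg (hp : 0 < p) (hsper : ∀ j, 1 ≤ j → s (j + p) = s j)
    (htper : ∀ j, 1 ≤ j → t (j + p) = t j) (h₁ : PalSeg s 0 (ℓ + 1))
    (h₂ : PalSeg s (ℓ + 1) (p - (ℓ + 1))) (ht : ∀ j, 1 ≤ j → j ≤ p → t j = s (p + 1 - j))
    {j : ℕ} (hj : 1 ≤ j) : t j = s (ℓ + 1 + j) := by
  refine eq_of_periodic_of_eqOn_Icc (g := fun j => s (ℓ + 1 + j)) hp htper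
    (shift_periodic hsper _) (fun i hi hip => ?_) hj
  calc t i = s (p + 1 - i) := ht i hi hip
    _ = s (p + (ℓ + 1) + 1 - (p + 1 - i)) :=
      apply_eq_apply_reflect_of_palSeg hsper h₁ h₂ (by omega) (by omega)
    _ = s (ℓ + 1 + i) := by congr 1; omega

end Reversal

theorem reversed_is_stripped_general
    (m mm : ℂ → ℂ) (a b am bm : ℕ → ℝ) (ms mms : ℕ → ℂ → ℂ) (p ℓ : ℕ)
    (hapos : ∀ j, 1 ≤ j → 0 < a j)
    (haper : ∀ j, 1 ≤ j → a (j + p) = a j)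
    (hbper : ∀ j, 1 ≤ j → b (j + p) = b j)
    (hdp : DoublyPalindromic a b p ℓ)
    (hcoef : HasJacobiCoeffs m a b ms)
    (hamper : ∀ j, 1 ≤ j → am (j + p) = am j)
    (hbmper : ∀ j, 1 ≤ j → bm (j + p) = bm j)
    (ham : ∀ j, 1 ≤ j → j ≤ p - 1 → am j = a (p - j))
    (hamp : am p = a p)
    (hbm : ∀ j, 1 ≤ j → j ≤ p → bm j = b (p + 1 - j))
    (hcoefm : HasJacobiCoeffs mm am bm mms) :
    (∀ z : ℂ, 0 < z.im → mm z = ms (ℓ + 1) z) ∧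
      ∀ z : ℂ, 0 < z.im →
        mm z = (firstKind a b (ℓ + 1) z * m z + secondKind a b (ℓ + 1) z) /
          (-(a (ℓ + 1) : ℂ) * (firstKind a b ℓ z * m z + secondKind a b ℓ z)) := by
  obtain ⟨-, hℓp, ha₁, ha₂, hb₁, hb₂⟩ := hdp
  have hp : 0 < p := by omega
  have hstrip : HasJacobiCoeffs (ms (ℓ + 1)) am bm (fun n => ms (ℓ + 1 + n)) :=
    (hcoef.shift (ℓ + 1)).congr_coeffs
      (fun n => (rotated_reverse_eq_shift_of_palSeg hp haper hamper ha₁ ha₂ ham hamp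
        n.succ_pos).symm)
      (fun n => (reverse_eq_shift_of_palSeg hp hbper hbmper hb₁ hb₂ hbm n.succ_pos).symm)
  have heq : ∀ z : ℂ, 0 < z.im → mm z = ms (ℓ + 1) z :=
    hcoefm.eqOn hstrip fun n => abs_le_sum_of_periodic hp hamper n.succ_pos
  exact ⟨heq, fun z hz => (heq z hz).trans
    (hcoef.apply_succ_eq_div (fun n => (hapos (n + 1) n.succ_pos).ne') hz ℓ)⟩

/-- If the purely periodic coefficients of the discrete m-function `m` are doubly
palindromic with period `p` and first length `ℓ`, and `m⁻` is the discrete m-function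
with `p`-periodic coefficients `(a_{p-1}, b_p), (a_{p-2}, b_{p-1}), …, (a_1, b_2), (a_p, b_1)`,
then `m⁻ = m_{ℓ+1}` on `ℂ₊`, and consequently
`m⁻ = (p_{ℓ+1} m + q_{ℓ+1}) / (-a_{ℓ+1}(p_ℓ m + q_ℓ))` on `ℂ₊`. -/
theorem reversed_is_stripped
    (m mm : ℂ → ℂ) (a b am bm : ℕ → ℝ) (ms mms : ℕ → ℂ → ℂ) (p ℓ : ℕ)
    (hapos : ∀ j, 1 ≤ j → 0 < a j)
    (haper : ∀ j, 1 ≤ j → a (j + p) = a j)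
    (hbper : ∀ j, 1 ≤ j → b (j + p) = b j)
    (hdp : DoublyPalindromic a b p ℓ)
    (hm : IsDiscreteMFunction m) (hcoef : HasJacobiCoeffs m a b ms)
    (hamper : ∀ j, 1 ≤ j → am (j + p) = am j)
    (hbmper : ∀ j, 1 ≤ j → bm (j + p) = bm j)
    (ham : ∀ j, 1 ≤ j → j ≤ p - 1 → am j = a (p - j))
    (hamp : am p = a p)
    (hbm : ∀ j, 1 ≤ j → j ≤ p → bm j = b (p + 1 - j))
    (hmm : IsDiscreteMFunction mm) (hcoefm : HasJacobiCoeffs mm am bm mms) :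
    (∀ z : ℂ, 0 < z.im → mm z = ms (ℓ + 1) z) ∧
      ∀ z : ℂ, 0 < z.im →
        mm z = (firstKind a b (ℓ + 1) z * m z + secondKind a b (ℓ + 1) z) /
          (-(a (ℓ + 1) : ℂ) * (firstKind a b ℓ z * m z + secondKind a b ℓ z)) :=
  reversed_is_stripped_general m mm a b am bm ms mms p ℓ hapos haper hbper hdp hcoef hamper hbmper
    ham hamp hbm hcoefm
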